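/- arXiv:2310.11972 — 2 statements merged into one kernel-verified Lean document; each statement's English description precedes it below -/
import Mathlib

section
/- In the category of posets and monotone maps, every strong epimorphism is a regular epimorphism. -/
/-!
Every monotone map `f : A → B` factors through the range of `f`, ordered by the preorder generated
by the pairs `f a ≤ f a'` with `a ≤ a'`; the second factor is injective, hence a monomorphism.
If `f` is a strong epimorphism, that monomorphism is an isomorphism, so `f` is surjective and the
order of `B` is generated by `f`. For such an `f`, a monotone map constant on the fibres of `f`
descends along `f` to a monotone map on `B`, which makes `f` the coequalizer of its kernel pair.
-/

open CategoryTheory CategoryTheory.Limits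

namespace OrderHom

variable {α γ : Type*} [Preorder α] [Preorder γ]

section Preorder

variable {β : Type*} [Preorder β] (f : α →o β)

def ImageLE : β → β → Prop :=
  Relation.ReflTransGen fun b b' => ∃ a a', a ≤ a' ∧ f a = b ∧ f a' = b'

structure IsQuotient : Prop where
  surjective : Function.Surjective f
  imageLE_of_le : ∀ ⦃b b' : β⦄, b ≤ b' → f.ImageLE b b'

variable {f}

theorem imageLE_apply_apply {a a' : α} (h : a ≤ a') : f.ImageLE (f a) (f a') :=
  .single ⟨a, a', h, rfl, rfl⟩

theorem ImageLE.map_le {g : β → γ} (hg : Monotone (g ∘ f)) {b b' : β} (h : f.ImageLE b b') :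
    g b ≤ g b' := by
  induction h with
  | refl => exact le_rfl
  | tail _ hstep ih =>
    obtain ⟨a, a', hle, rfl, rfl⟩ := hstep
    exact ih.trans (hg hle)

theorem ImageLE.le {b b' : β} (h : f.ImageLE b b') : b ≤ b' :=
  h.map_le (g := id) f.monotone

noncomputable def IsQuotient.descend (hf : f.IsQuotient) (g : α →o γ)
    (hg : ∀ ⦃a a'⦄, f a = f a' → g a = g a') : β →o γ where
  toFun := g ∘ Function.surjInv hf.surjective
  monotone' b b' h := (hf.imageLE_of_le h).map_le fun a a' ha => by
    simpa only [Function.comp_apply, hg (Function.surjInv_eq hf.surjective _)] using g.monotone ha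

theorem IsQuotient.descend_apply_apply (hf : f.IsQuotient) (g : α →o γ)
    (hg : ∀ ⦃a a'⦄, f a = f a' → g a = g a') (a : α) : hf.descend g hg (f a) = g a :=
  hg (Function.surjInv_eq hf.surjective _)

end Preorder

section PartialOrder

variable {β : Type*} [PartialOrder β] (f : α →o β)

/-- A copy of `Set.range f`, so that it carries the order `ImageLE f` instead of the one
induced from `β`. -/
def GeneratedRange : Type _ := Set.range f

instance : PartialOrder f.GeneratedRange where
  le x y := f.ImageLE x.1 y.1
  le_refl _ := .refl
  le_trans _ _ _ := .trans
  le_antisymm _ _ h h' := Subtype.ext (h.le.antisymm h'.le)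

def toGeneratedRange : α →o f.GeneratedRange where
  toFun a := ⟨f a, a, rfl⟩
  monotone' _ _ h := imageLE_apply_apply h

def ofGeneratedRange : f.GeneratedRange →o β where
  toFun x := x.1
  monotone' _ _ h := ImageLE.le h

theorem ofGeneratedRange_injective : Function.Injective f.ofGeneratedRange :=
  Subtype.val_injective

end PartialOrder

end OrderHom

namespace PartOrd

theorem isQuotient_of_strongEpi {A B : PartOrd} (f : A ⟶ B) [StrongEpi f] : f.hom.IsQuotient := by
  let g : of f.hom.GeneratedRange ⟶ B := ofHom f.hom.ofGeneratedRange
  have : Mono g := ConcreteCategory.mono_of_injective g f.hom.ofGeneratedRange_injective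
  have : StrongEpi (ofHom f.hom.toGeneratedRange ≫ g) := inferInstanceAs (StrongEpi f)
  have : StrongEpi g := strongEpi_of_strongEpi (ofHom f.hom.toGeneratedRange) g
  have : IsIso g := isIso_of_mono_of_strongEpi g
  let e : of f.hom.GeneratedRange ≅ B := asIso g
  have he (b : B) : (e.inv b).1 = b := hom_inv_apply e b
  refine ⟨fun b => he b ▸ (e.inv b).2, fun b b' h => ?_⟩
  have := e.inv.hom.monotone h
  rwa [← he b, ← he b']

section KernelPair

variable {A B : PartOrd} (f : A ⟶ B)

def kernelPair : PartOrd := of {p : A × A // f p.1 = f p.2}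

def kernelPairFst : kernelPair f ⟶ A := ofHom ⟨fun p => p.1.1, fun _ _ h => h.1⟩

def kernelPairSnd : kernelPair f ⟶ A := ofHom ⟨fun p => p.1.2, fun _ _ h => h.2⟩

theorem kernelPair_condition : kernelPairFst f ≫ f = kernelPairSnd f ≫ f :=
  ext fun p => p.2

variable {f}

theorem cofork_π_apply_eq_of_apply_eq (s : Cofork (kernelPairFst f) (kernelPairSnd f)) {a a' : A}
    (h : f a = f a') : s.π a = s.π a' :=
  ConcreteCategory.congr_hom s.condition ⟨(a, a'), h⟩

variable (hf : f.hom.IsQuotient)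

noncomputable def kernelPairDesc (s : Cofork (kernelPairFst f) (kernelPairSnd f)) : B ⟶ s.pt :=
  ofHom (hf.descend s.π.hom fun _ _ => cofork_π_apply_eq_of_apply_eq s)

theorem comp_kernelPairDesc (s : Cofork (kernelPairFst f) (kernelPairSnd f)) :
    f ≫ kernelPairDesc hf s = s.π :=
  ext <| hf.descend_apply_apply _ fun _ _ => cofork_π_apply_eq_of_apply_eq s

noncomputable def regularEpiOfIsQuotient : RegularEpi f where
  W := kernelPair f
  left := kernelPairFst f
  right := kernelPairSnd f
  w := kernelPair_condition f
  isColimit := Cofork.IsColimit.mk _ (kernelPairDesc hf) (comp_kernelPairDesc hf) fun s _ hm =>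
    have : Epi f := ConcreteCategory.epi_of_surjective f hf.surjective
    (cancel_epi f).1 (hm.trans (comp_kernelPairDesc hf s).symm)

end KernelPair

end PartOrd

/-- In the category of posets and monotone maps, every strong epimorphism
is a regular epimorphism. -/
theorem PartOrd.strongEpi_regular {A B : PartOrd} (f : A ⟶ B) (hf : StrongEpi f) :
    Nonempty (RegularEpi f) :=
  ⟨regularEpiOfIsQuotient (isQuotient_of_strongEpi f)⟩
end

section
/- Let K be a locally λ-presentable category and L a full reflective subcategory closed under λ-filtered colimits in K, with reflector L' and units ρ_X : X → L'X. Then an object A of K lies in L if and only if A is orthogonal to ρ_Y for every λ-presentable object Y of K. -/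
open CategoryTheory CategoryTheory.Limits

universe v u

variable {C : Type u} [Category.{v} C]

/-- A small category `J` is `κ`-filtered if every diagram in `J` of size `< κ`
admits a cocone. -/
def IsCardFiltered (κ : Cardinal.{v}) (J : Type v) [SmallCategory J] : Prop :=
  ∀ (K : Type v) [SmallCategory K],
    Cardinal.mk (Σ a b : K, a ⟶ b) < κ → ∀ F : K ⥤ J, Nonempty (Cocone F)

/-- An object `X` is `κ`-presentable if its covariant hom-functor preserves colimits of
`κ`-filtered diagrams. -/
def IsCardPresentable (κ : Cardinal.{v}) (X : C) : Prop :=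
  ∀ (J : Type v) [SmallCategory J], IsCardFiltered κ J →
    Nonempty (PreservesColimitsOfShape J (coyoneda.obj (Opposite.op X)))

/-- A category is locally `κ`-presentable if it is cocomplete and has a small strong
generator (detecting family) consisting of `κ`-presentable objects. -/
def IsLocallyPresentable (κ : Cardinal.{v}) (C : Type u) [Category.{v} C] : Prop :=
  HasColimitsOfSize.{v, v} C ∧
    ∃ S : Set C, Small.{v} S ∧ ObjectProperty.IsDetecting S ∧ ∀ X ∈ S, IsCardPresentable κ X

/-- A morphism `f : A ⟶ B` is a `κ`-pure epimorphism if every `κ`-presentable object is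
projective with respect to it: every morphism from a `κ`-presentable object to `B`
factors through `f`. -/
def IsPureEpi (κ : Cardinal.{v}) {A B : C} (f : A ⟶ B) : Prop :=
  ∀ X : C, IsCardPresentable κ X → ∀ g : X ⟶ B, ∃ h : X ⟶ A, h ≫ f = g


/-! The forward direction is the universal property of the unit. Conversely, a small detecting
family of `κ`-presentable objects makes `A` a `κ`-filtered colimit of `κ`-presentable objects
`Y_j`. The reflection, followed by the inclusion, preserves this colimit, so orthogonality of `A`
to the units `ρ_{Y_j}` yields a cocone `L' Y_j ⟶ A` whose induced map `L' A ⟶ A` retracts `ρ_A`;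
an object whose unit is a split monomorphism lies in `L`. -/

universe w

namespace CategoryTheory

lemma ObjectProperty.comp_colimit_ι_eq_of_comp_hom_eq {Q : ObjectProperty C}
    [Q.IsClosedUnderColimitsOfShape WalkingParallelPair] [HasCoequalizers C] {X : C}
    [HasColimit (CostructuredArrow.proj Q.ι X ⋙ Q.ι)] {j : CostructuredArrow Q.ι X}
    {G : C} (hG : Q G) {φ₁ φ₂ : G ⟶ j.left.obj} (h : φ₁ ≫ j.hom = φ₂ ≫ j.hom) :
    φ₁ ≫ colimit.ι (CostructuredArrow.proj Q.ι X ⋙ Q.ι) j =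
      φ₂ ≫ colimit.ι (CostructuredArrow.proj Q.ι X ⋙ Q.ι) j := by
  let coeq : Q.FullSubcategory :=
    ⟨coequalizer φ₁ φ₂, Q.prop_colimit _ (by rintro (_ | _); exacts [hG, j.left.2])⟩
  let ψ : j ⟶ CostructuredArrow.mk (Y := coeq) (coequalizer.desc j.hom h) :=
    CostructuredArrow.homMk (ObjectProperty.homMk (coequalizer.π _ _)) (coequalizer.π_desc _ _)
  rw [← colimit.w _ ψ]
  exact coequalizer.condition_assoc _ _ _

/-- The analogue of `ObjectProperty.IsStrongGenerator.isDense_colimitsCardinalClosure_ι`: a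
detecting family suffices, since injectivity is only needed on morphisms out of objects of `P`. -/
lemma ObjectProperty.IsDetecting.isDense_colimitsCardinalClosure_ι
    {κ : Cardinal.{w}} [Fact κ.IsRegular] [HasColimitsOfSize.{w, w} C] [LocallySmall.{w} C]
    {P : ObjectProperty C} [ObjectProperty.Small.{w} P] (hP : P.IsDetecting)
    (hP' : P ≤ isCardinalPresentable C κ) :
    (P.colimitsCardinalClosure κ).ι.IsDense where
  isDenseAt X := by
    let Q := P.colimitsCardinalClosure κ
    let E := Functor.LeftExtension.mk _ Q.ι.rightUnitor.inv
    let Φ := CostructuredArrow.proj Q.ι X ⋙ Q.ι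
    have : HasColimitsOfShape (CostructuredArrow Q.ι X) C :=
      hasColimitsOfShape_of_equivalence (equivSmallModel.{w} (CostructuredArrow Q.ι X)).symm
    have : Q.IsClosedUnderColimitsOfShape WalkingParallelPair :=
      P.isClosedUnderColimitsOfShape_colimitsCardinalClosure κ _ <|
        .of_le (by simp only [hasCardinalLT_aleph0_iff]; infer_instance)
          (Cardinal.IsRegular.aleph0_le Fact.out)
    have hE (j : CostructuredArrow Q.ι X) : (E.coconeAt X).ι.app j = j.hom := Category.id_comp _
    have hinj (G : C) (hG : P G) (g₁ g₂ : G ⟶ colimit Φ)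
        (h : g₁ ≫ colimit.desc Φ (E.coconeAt X) = g₂ ≫ colimit.desc Φ (E.coconeAt X)) :
        g₁ = g₂ := by
      have : IsCardinalPresentable G κ := hP' _ hG
      obtain ⟨j₁, f₁, rfl⟩ :=
        IsCardinalPresentable.exists_hom_of_isColimit κ (colimit.isColimit _) g₁
      obtain ⟨j₂, f₂, rfl⟩ :=
        IsCardinalPresentable.exists_hom_of_isColimit κ (colimit.isColimit _) g₂
      -- pass to the common stage `IsFiltered.max j₁ j₂`
      simp only [colimit.cocone_ι, ← colimit.w Φ (IsFiltered.leftToMax j₁ j₂),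
        ← colimit.w Φ (IsFiltered.rightToMax j₁ j₂), ← Category.assoc] at h ⊢
      refine Q.comp_colimit_ι_eq_of_comp_hom_eq (P.le_colimitsCardinalClosure κ _ hG) ?_
      simp only [Category.assoc, colimit.ι_desc, hE] at h
      exact (Category.assoc _ _ _).trans (h.trans (Category.assoc _ _ _).symm)
    have : IsIso (colimit.desc Φ (E.coconeAt X)) := by
      refine hP _ (fun G hG g ↦ ?_)
      let γ : CostructuredArrow Q.ι X :=
        CostructuredArrow.mk (Y := ⟨G, P.le_colimitsCardinalClosure _ _ hG⟩) (by exact g)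
      have hγ : colimit.ι Φ γ ≫ colimit.desc Φ (E.coconeAt X) = g :=
        (colimit.ι_desc _ _).trans (hE γ)
      exact ⟨colimit.ι Φ γ, hγ, fun g₁ hg₁ ↦ hinj G hG _ _ (hg₁.trans hγ.symm)⟩
    exact ⟨IsColimit.ofIsoColimit (colimit.isColimit _)
      (Cocone.ext (asIso (colimit.desc Φ (E.coconeAt X))))⟩

lemma isCardinalLocallyPresentable_of_isDetecting {κ : Cardinal.{w}} [Fact κ.IsRegular]
    [HasColimitsOfSize.{w, w} C] [LocallySmall.{w} C] {P : ObjectProperty C}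
    [ObjectProperty.Small.{w} P] (hP : P.IsDetecting) (hP' : P ≤ isCardinalPresentable C κ) :
    IsCardinalLocallyPresentable C κ := by
  have := hP.isDense_colimitsCardinalClosure_ι hP'
  have hgen := IsCardinalFilteredGenerator.of_isDense_ι _ κ
    (P.colimitsCardinalClosure_le_isCardinalPresentable (κ := κ) hP')
  have := hgen.hasCardinalFilteredGenerator
  constructor

section Reflective

variable {D : Type*} [Category D] {i : D ⥤ C} [Reflective i]

lemma Functor.essImage.bijective_unit_comp {A : C} (hA : i.essImage A) (X : C) :
    Function.Bijective fun g : i.obj ((reflector i).obj X) ⟶ A ↦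
      (reflectorAdjunction i).unit.app X ≫ g := by
  have h : ⇑(unitCompPartialBijective X hA).symm =
      fun g ↦ (reflectorAdjunction i).unit.app X ≫ g :=
    funext (unitCompPartialBijective_symm_apply X hA)
  exact h ▸ (unitCompPartialBijective X hA).symm.bijective

lemma mem_essImage_of_isColimit_of_bijective_unit_comp {J : Type*} [Category J] {F : J ⥤ C}
    {c : Cocone F} (hc : IsColimit c) [PreservesColimit (F ⋙ reflector i) i]
    (h : ∀ j, Function.Bijective fun g : i.obj ((reflector i).obj (F.obj j)) ⟶ c.pt ↦
      (reflectorAdjunction i).unit.app (F.obj j) ≫ g) :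
    i.essImage c.pt := by
  let η := (reflectorAdjunction i).unit
  have hT : IsColimit ((reflector i ⋙ i).mapCocone c) := isColimitOfPreserves _ hc
  choose f hf using fun j ↦ (h j).2 (c.ι.app j)
  have hf_nat {j j' : J} (m : j ⟶ j') : (reflector i ⋙ i).map (F.map m) ≫ f j' = f j :=
    (h j).1 <| (η.naturality_assoc (F.map m) (f j')).symm.trans <|
      (congrArg (F.map m ≫ ·) (hf j')).trans ((c.w m).trans (hf j).symm)
  let r : i.obj ((reflector i).obj c.pt) ⟶ c.pt :=
    hT.desc ⟨c.pt, { app := f, naturality := fun _ _ m ↦ by simpa using hf_nat m }⟩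
  have hr : η.app c.pt ≫ r = 𝟙 c.pt := hc.hom_ext fun j ↦ calc
    c.ι.app j ≫ η.app c.pt ≫ r = η.app (F.obj j) ≫ f j :=
      (η.naturality_assoc (c.ι.app j) r).trans (congrArg _ (hT.fac _ j))
    _ = c.ι.app j ≫ 𝟙 c.pt := (hf j).trans (Category.comp_id _).symm
  have : IsSplitMono (η.app c.pt) := IsSplitMono.mk' ⟨r, hr⟩
  exact mem_essImage_of_unit_isSplitMono

end Reflective

end CategoryTheory

lemma isCardFiltered_iff_isCardinalFiltered (κ : Cardinal.{v}) [Fact κ.IsRegular]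
    (J : Type v) [SmallCategory J] : IsCardFiltered κ J ↔ IsCardinalFiltered J κ := by
  have hArrow (K : Type v) [SmallCategory K] :
      HasCardinalLT (Arrow K) κ ↔ Cardinal.mk (Σ a b : K, a ⟶ b) < κ := by
    rw [hasCardinalLT_iff_of_equiv (Arrow.equivSigma K), hasCardinalLT_iff_cardinal_mk_lt]
  refine ⟨fun h ↦ ⟨fun F hF ↦ h _ ((hArrow _).1 hF) F⟩, fun h K _ hK F ↦ ?_⟩
  exact IsCardinalFiltered.nonempty_cocone F ((hArrow K).2 hK)

lemma isCardPresentable_iff_isCardinalPresentable (κ : Cardinal.{v}) [Fact κ.IsRegular]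
    (X : C) : IsCardPresentable κ X ↔ IsCardinalPresentable X κ := by
  refine ⟨fun h ↦ ⟨fun J _ _ ↦ (h J ((isCardFiltered_iff_isCardinalFiltered κ J).2 ‹_›)).some⟩,
    fun h J _ hJ ↦ ?_⟩
  have := (isCardFiltered_iff_isCardinalFiltered κ J).1 hJ
  exact ⟨preservesColimitsOfShape_of_isCardinalPresentable X κ J⟩

lemma IsLocallyPresentable.isCardinalLocallyPresentable {κ : Cardinal.{v}} [Fact κ.IsRegular]
    (hC : IsLocallyPresentable κ C) : IsCardinalLocallyPresentable C κ := by
  obtain ⟨_, S, hS, hdet, hpres⟩ := hC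
  have : ObjectProperty.Small.{v} (S : ObjectProperty C) := hS
  exact isCardinalLocallyPresentable_of_isDetecting hdet fun X hX ↦
    (isCardPresentable_iff_isCardinalPresentable κ X).1 (hpres X hX)

/-- Let `C` be locally `κ`-presentable and `L` a full reflective
subcategory closed under `κ`-filtered colimits (the inclusion preserves them), with
reflection units `ρ_X`.  Then an object `A` lies in `L` iff it is orthogonal to `ρ_Y`
for every `κ`-presentable object `Y`. -/
theorem essImage_iff_orthogonal_units (κ : Cardinal.{v}) (hκ : κ.IsRegular)
    (hC : IsLocallyPresentable κ C) (P : C → Prop)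
    [Reflective (ObjectProperty.ι P)]
    (hclosed : ∀ (J : Type v) [SmallCategory J], IsCardFiltered κ J →
      Nonempty (PreservesColimitsOfShape J (ObjectProperty.ι P)))
    (A : C) :
    (ObjectProperty.ι P).essImage A ↔
      ∀ Y : C, IsCardPresentable κ Y →
        Function.Bijective
          (fun g : (ObjectProperty.ι P).obj
              ((reflector (ObjectProperty.ι P)).obj Y) ⟶ A =>
            (reflectorAdjunction (ObjectProperty.ι P)).unit.app Y ≫ g) := by
  have : Fact κ.IsRegular := ⟨hκ⟩
  refine ⟨fun hA Y _ ↦ hA.bijective_unit_comp Y, fun horth ↦ ?_⟩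
  have := hC.isCardinalLocallyPresentable
  obtain ⟨J, _, hJ, ⟨p⟩⟩ :=
    (isCardinalFilteredGenerator_isCardinalPresentable C κ).exists_colimitsOfShape A
  have := (hclosed J ((isCardFiltered_iff_isCardinalFiltered κ J).2 hJ)).some
  exact mem_essImage_of_isColimit_of_bijective_unit_comp p.isColimit fun j ↦
    horth _ ((isCardPresentable_iff_isCardinalPresentable κ _).2 (p.prop_diag_obj j))
end
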